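/- Let c be the unique real solution of h(c − 1) = h(c) − h′(c). Then 0.947 < h(c − 1) − h(c) < 0.949; that is, G(1) ≈ 0.948. -/

import Mathlib

/-!
Since `h(c - 1) - h(c) = -h'(c) = sech c`, it suffices to locate `c`. The mean value theorem gives
`h'(ξ) = h'(c)` for some `ξ ∈ (c - 1, c)`, which forces `ξ = -c`, so `c ∈ (0, 1/2)`, where the
tangent gap `x ↦ h(x - 1) - h(x) + h'(x)` is monotone. At `x = log u` both `tanh x` and `sech x`
are rational, and `cos (h x + d) = tanh x cos d - sech x sin d` turns the sign of the gap into a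
comparison of `tanh (x - 1)`, controlled by decimal bounds on `e`, with Taylor polynomials of
`sin` and `cos`. The gap changes sign between `u = 1.386` and `u = 1.394`, and `sech ∘ log` maps
that interval into `(0.947, 0.949)`.
-/

/-- The hill function `h(x) = arccos(tanh x)`. -/
noncomputable def hill (x : ℝ) : ℝ := Real.arccos (Real.tanh x)

/-- The derivative of the hill function: `h'(x) = -1/cosh x`. -/
noncomputable def hill' (x : ℝ) : ℝ := -1 / Real.cosh x

open Real Finset
open scoped Nat

noncomputable def cosTaylor (n : ℕ) (x : ℝ) : ℝ :=
  ∑ k ∈ range n, (-1) ^ k * x ^ (2 * k) / (2 * k)!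

noncomputable def sinTaylor (n : ℕ) (x : ℝ) : ℝ :=
  ∑ k ∈ range n, (-1) ^ k * x ^ (2 * k + 1) / (2 * k + 1)!

theorem hasDerivAt_sinTaylor (n : ℕ) (x : ℝ) : HasDerivAt (sinTaylor n) (cosTaylor n x) x := by
  unfold sinTaylor cosTaylor
  refine (HasDerivAt.fun_sum fun k _ => ((hasDerivAt_pow _ x).const_mul _).div_const _)
    |>.congr_deriv ?_
  refine sum_congr rfl fun k _ => ?_
  rw [Nat.factorial_succ]
  push_cast
  field_simp

theorem hasDerivAt_cosTaylor_succ (n : ℕ) (x : ℝ) :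
    HasDerivAt (cosTaylor (n + 1)) (-sinTaylor n x) x := by
  have hshift : cosTaylor (n + 1) =
      fun y => 1 + ∑ k ∈ range n, (-1 : ℝ) ^ (k + 1) * y ^ (2 * k + 2) / (2 * k + 2)! := by
    ext y
    simp [cosTaylor, sum_range_succ', mul_add, add_comm]
  rw [hshift, sinTaylor, ← sum_neg_distrib]
  refine ((HasDerivAt.fun_sum fun k _ =>
    ((hasDerivAt_pow _ x).const_mul _).div_const _).const_add 1) |>.congr_deriv ?_
  refine sum_congr rfl fun k _ => ?_
  rw [show 2 * k + 2 = (2 * k + 1) + 1 by ring, Nat.factorial_succ]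
  push_cast
  field_simp
  ring

theorem nonneg_of_hasDerivAt_nonneg {f f' : ℝ → ℝ} (hf : ∀ x, HasDerivAt f (f' x) x)
    (h₀ : f 0 = 0) (hf' : ∀ x, 0 ≤ x → 0 ≤ f' x) {x : ℝ} (hx : 0 ≤ x) : 0 ≤ f x := by
  have hmono : MonotoneOn f (Set.Ici 0) :=
    monotoneOn_of_hasDerivWithinAt_nonneg (convex_Ici 0)
      (fun y _ => (hf y).continuousAt.continuousWithinAt)
      (fun y _ => (hf y).hasDerivWithinAt)
      (fun y hy => hf' y (interior_subset hy))
  simpa [h₀] using hmono Set.self_mem_Ici hx hx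

theorem sin_taylor_sign_of_cos {n : ℕ}
    (hcos : ∀ y, 0 ≤ y → 0 ≤ (-1) ^ n * (cos y - cosTaylor n y)) {x : ℝ} (hx : 0 ≤ x) :
    0 ≤ (-1) ^ n * (sin x - sinTaylor n x) :=
  nonneg_of_hasDerivAt_nonneg
    (fun y => ((hasDerivAt_sin y).sub (hasDerivAt_sinTaylor n y)).const_mul _)
    (by simp [sinTaylor]) hcos hx

theorem cos_taylor_sign_of_sin {n : ℕ}
    (hsin : ∀ y, 0 ≤ y → 0 ≤ (-1) ^ n * (sin y - sinTaylor n y)) {x : ℝ} (hx : 0 ≤ x) :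
    0 ≤ (-1) ^ (n + 1) * (cos x - cosTaylor (n + 1) x) :=
  nonneg_of_hasDerivAt_nonneg
    (fun y => ((hasDerivAt_cos y).sub (hasDerivAt_cosTaylor_succ n y)).const_mul _
      |>.congr_deriv (by ring))
    (by simp [cosTaylor, sum_range_succ']) hsin hx

theorem cos_taylor_alternating (n : ℕ) :
    ∀ x, 0 ≤ x → 0 ≤ (-1) ^ (n + 1) * (cos x - cosTaylor (n + 1) x) := by
  induction n with
  | zero => intro x _; simp [cosTaylor, cos_le_one]
  | succ n ih => exact fun _ => cos_taylor_sign_of_sin fun _ => sin_taylor_sign_of_cos ih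

theorem sin_taylor_alternating (n : ℕ) {x : ℝ} (hx : 0 ≤ x) :
    0 ≤ (-1) ^ (n + 1) * (sin x - sinTaylor (n + 1) x) :=
  sin_taylor_sign_of_cos (cos_taylor_alternating n) hx

theorem one_sub_tanh_sq (x : ℝ) : 1 - tanh x ^ 2 = (cosh x)⁻¹ ^ 2 := by
  have := (cosh_pos x).ne'
  rw [tanh_eq_sinh_div_cosh]
  field_simp
  linarith [cosh_sq x]

theorem cos_hill (x : ℝ) : cos (hill x) = tanh x :=
  cos_arccos (neg_one_lt_tanh x).le (tanh_lt_one x).le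

theorem sin_hill (x : ℝ) : sin (hill x) = (cosh x)⁻¹ := by
  rw [hill, sin_arccos, one_sub_tanh_sq, sqrt_sq (inv_nonneg.2 (cosh_pos x).le)]

theorem hasDerivAt_tanh (x : ℝ) : HasDerivAt tanh ((cosh x)⁻¹ ^ 2) x := by
  have h := (hasDerivAt_sinh x).div (hasDerivAt_cosh x) (cosh_pos x).ne'
  rw [show sinh / cosh = tanh from funext fun y => (tanh_eq_sinh_div_cosh y).symm] at h
  refine h.congr_deriv ?_
  have := (cosh_pos x).ne'
  field_simp
  linarith [cosh_sq x]

theorem hasDerivAt_hill (x : ℝ) : HasDerivAt hill (hill' x) x := by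
  have h := (hasDerivAt_arccos (neg_one_lt_tanh x).ne' (tanh_lt_one x).ne).comp x
    (hasDerivAt_tanh x)
  rw [one_sub_tanh_sq, sqrt_sq (inv_nonneg.2 (cosh_pos x).le)] at h
  refine h.congr_deriv ?_
  have := (cosh_pos x).ne'
  simp only [hill']
  field_simp

theorem hasDerivAt_hill' (x : ℝ) : HasDerivAt hill' (sinh x / cosh x ^ 2) x := by
  refine ((hasDerivAt_const x (-1 : ℝ)).div (hasDerivAt_cosh x) (cosh_pos x).ne').congr_deriv ?_
  ring

theorem abs_eq_abs_of_hill'_eq {x y : ℝ} (h : hill' x = hill' y) : |x| = |y| := by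
  have hcosh : cosh |x| = cosh |y| := by
    rw [cosh_abs, cosh_abs]
    simpa [hill'] using congrArg (fun t => -t⁻¹) h
  exact cosh_injOn (abs_nonneg x) (abs_nonneg y) hcosh

/-- `c(L)` is the zero of `tangentGap L`: the tangent to `h` at `c(L)` meets the graph of `h`
again at `c(L) - L`. -/
noncomputable def tangentGap (L x : ℝ) : ℝ := hill (x - L) - (hill x - L * hill' x)

theorem mem_Ioo_of_tangentGap_eq_zero {L c : ℝ} (hL : 0 < L) (hc : tangentGap L c = 0) :
    c ∈ Set.Ioo 0 (L / 2) := by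
  obtain ⟨ξ, ⟨hξL, hξc⟩, hξ⟩ := exists_hasDerivAt_eq_slope hill hill' (sub_lt_self c hL)
    (HasDerivAt.continuousOn fun x _ => hasDerivAt_hill x) fun x _ => hasDerivAt_hill x
  have hslope : hill' ξ = hill' c := by
    rw [hξ, sub_sub_cancel, div_eq_iff hL.ne']
    simp only [tangentGap] at hc
    linarith
  rcases abs_eq_abs.1 (abs_eq_abs_of_hill'_eq hslope) with rfl | rfl
  · exact absurd hξc (lt_irrefl _)
  · constructor <;> linarith

theorem hasDerivAt_tangentGap (L x : ℝ) :
    HasDerivAt (tangentGap L) (hill' (x - L) - (hill' x - L * (sinh x / cosh x ^ 2))) x :=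
  ((hasDerivAt_hill (x - L)).comp_sub_const x L).sub
    ((hasDerivAt_hill x).sub ((hasDerivAt_hill' x).const_mul L))

theorem monotoneOn_tangentGap {L : ℝ} (hL : 0 ≤ L) :
    MonotoneOn (tangentGap L) (Set.Icc 0 (L / 2)) := by
  refine monotoneOn_of_hasDerivWithinAt_nonneg (convex_Icc 0 (L / 2))
    (HasDerivAt.continuousOn fun x _ => hasDerivAt_tangentGap L x)
    (fun x _ => (hasDerivAt_tangentGap L x).hasDerivWithinAt) fun x hx => ?_
  rw [interior_Icc] at hx
  have hcosh : cosh x ≤ cosh (x - L) := by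
    rw [cosh_le_cosh, abs_of_pos hx.1, abs_of_neg (by linarith [hx.2])]
    linarith [hx.2]
  have hslope : 0 ≤ hill' (x - L) - hill' x := by
    simp only [hill', neg_div, one_div]
    have := inv_anti₀ (cosh_pos x) hcosh
    linarith
  have hcurv : 0 ≤ L * (sinh x / cosh x ^ 2) :=
    mul_nonneg hL (div_nonneg (sinh_nonneg_iff.2 hx.1.le) (sq_nonneg _))
  linarith

theorem cos_hill_add (x d : ℝ) : cos (hill x + d) = tanh x * cos d - (cosh x)⁻¹ * sin d := by
  rw [cos_add, cos_hill, sin_hill]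

theorem hill_lt_hill_add_iff {x y d : ℝ} (h : hill x + d ∈ Set.Icc 0 π) :
    hill y < hill x + d ↔ cos (hill x + d) < tanh y := by
  conv_lhs => rw [← arccos_cos h.1 h.2]
  exact strictAntiOn_arccos.lt_iff_gt ⟨(neg_one_lt_tanh y).le, (tanh_lt_one y).le⟩
    ⟨neg_one_le_cos _, cos_le_one _⟩

theorem hill_add_lt_hill_iff {x y d : ℝ} (h : hill x + d ∈ Set.Icc 0 π) :
    hill x + d < hill y ↔ tanh y < cos (hill x + d) := by
  conv_lhs => rw [← arccos_cos h.1 h.2]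
  exact strictAntiOn_arccos.lt_iff_gt ⟨neg_one_le_cos _, cos_le_one _⟩
    ⟨(neg_one_lt_tanh y).le, (tanh_lt_one y).le⟩

theorem tangentGap_eq (L x : ℝ) :
    tangentGap L x = hill (x - L) - (hill x + L * (cosh x)⁻¹) := by
  simp only [tangentGap, hill']
  ring

theorem hill_add_mul_inv_cosh_mem_Icc {L x : ℝ} (hx : 0 ≤ x) (hL : 0 ≤ L) (hLπ : L ≤ π / 2) :
    hill x + L * (cosh x)⁻¹ ∈ Set.Icc 0 π := by
  have hhill : hill x ≤ π / 2 := by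
    rw [hill, arccos_le_pi_div_two, tanh_eq_sinh_div_cosh]
    exact div_nonneg (sinh_nonneg_iff.2 hx) (cosh_pos x).le
  have hsech : (cosh x)⁻¹ ≤ 1 := inv_le_one_of_one_le₀ (one_le_cosh x)
  have : L * (cosh x)⁻¹ ≤ L := mul_le_of_le_one_right hL hsech
  exact ⟨add_nonneg (arccos_nonneg _) (mul_nonneg hL (inv_nonneg.2 (cosh_pos x).le)), by linarith⟩

theorem tanh_log {u : ℝ} (hu : 0 < u) : tanh (log u) = (u ^ 2 - 1) / (u ^ 2 + 1) := by
  rw [tanh_eq_sinh_div_cosh, sinh_log hu, cosh_log hu]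
  field_simp

theorem inv_cosh_log {u : ℝ} (hu : 0 < u) : (cosh (log u))⁻¹ = 2 * u / (u ^ 2 + 1) := by
  rw [cosh_log hu]
  field_simp

theorem tanh_log_sub_one_mem_Ioo {u : ℝ} (hu : 0 < u) :
    tanh (log u - 1) ∈ Set.Ioo ((u ^ 2 - 2.7182818286 ^ 2) / (u ^ 2 + 2.7182818286 ^ 2))
      ((u ^ 2 - 2.7182818283 ^ 2) / (u ^ 2 + 2.7182818283 ^ 2)) := by
  have he := exp_pos 1
  rw [← log_exp 1, ← log_div hu.ne' he.ne', tanh_log (div_pos hu he), div_pow,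
    div_sub_one (by positivity), div_add_one (by positivity),
    div_div_div_cancel_right₀ (by positivity)]
  have hlt := exp_one_lt_d9
  have hgt := exp_one_gt_d9
  constructor
  · rw [div_lt_div_iff₀ (by positivity) (by positivity)]
    nlinarith [mul_pos (mul_pos hu hu) (add_pos he (by norm_num : (0:ℝ) < 2.7182818286))]
  · rw [div_lt_div_iff₀ (by positivity) (by positivity)]
    nlinarith [mul_pos (mul_pos hu hu) (add_pos he (by norm_num : (0:ℝ) < 2.7182818283))]

theorem tangentGap_one_log_lt_zero : tangentGap 1 (log 1.386) < 0 := by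
  have hu : (0 : ℝ) < 1.386 := by norm_num
  have hmem := hill_add_mul_inv_cosh_mem_Icc (log_nonneg (by norm_num : (1 : ℝ) ≤ 1.386))
    zero_le_one (by linarith [pi_gt_three])
  rw [tangentGap_eq, sub_neg, hill_lt_hill_add_iff hmem, cos_hill_add, one_mul, tanh_log hu,
    inv_cosh_log hu]
  have hcos := cos_taylor_alternating 4 (2 * 1.386 / (1.386 ^ 2 + 1)) (by norm_num)
  have hsin := sin_taylor_alternating 3 (x := 2 * 1.386 / (1.386 ^ 2 + 1)) (by norm_num)
  have hτ := (tanh_log_sub_one_mem_Ioo hu).1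
  norm_num [cosTaylor, sinTaylor, sum_range_succ, Nat.factorial] at hcos hsin hτ ⊢
  linarith

theorem zero_lt_tangentGap_one_log : 0 < tangentGap 1 (log 1.394) := by
  have hu : (0 : ℝ) < 1.394 := by norm_num
  have hmem := hill_add_mul_inv_cosh_mem_Icc (log_nonneg (by norm_num : (1 : ℝ) ≤ 1.394))
    zero_le_one (by linarith [pi_gt_three])
  rw [tangentGap_eq, sub_pos, hill_add_lt_hill_iff hmem, cos_hill_add, one_mul, tanh_log hu,
    inv_cosh_log hu]
  have hcos := cos_taylor_alternating 3 (2 * 1.394 / (1.394 ^ 2 + 1)) (by norm_num)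
  have hsin := sin_taylor_alternating 2 (x := 2 * 1.394 / (1.394 ^ 2 + 1)) (by norm_num)
  have hτ := (tanh_log_sub_one_mem_Ioo hu).2
  norm_num [cosTaylor, sinTaylor, sum_range_succ, Nat.factorial] at hcos hsin hτ ⊢
  linarith

theorem inv_cosh_lt_inv_cosh {x y : ℝ} (hx : 0 ≤ x) (hxy : x < y) : (cosh y)⁻¹ < (cosh x)⁻¹ :=
  inv_strictAnti₀ (cosh_pos x) (cosh_strictMonoOn hx (hx.trans hxy.le) hxy)

theorem mem_Ioo_log_of_tangentGap_one_eq_zero {c : ℝ} (hc : tangentGap 1 c = 0) :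
    c ∈ Set.Ioo (log 1.386) (log 1.394) := by
  obtain ⟨hc₀, hc₁⟩ := mem_Ioo_of_tangentGap_eq_zero one_pos hc
  have hmem {u : ℝ} (hu : 1 ≤ u) (hu' : u ≤ 1.5) : log u ∈ Set.Icc 0 (1 / 2) :=
    ⟨log_nonneg hu, (log_le_iff_le_exp (by linarith)).2 (by linarith [add_one_le_exp (1 / 2)])⟩
  have hmono := monotoneOn_tangentGap (L := 1) zero_le_one
  have hcI : c ∈ Set.Icc 0 (1 / 2) := ⟨hc₀.le, hc₁.le⟩
  exact ⟨hmono.reflect_lt (hmem (by norm_num) (by norm_num)) hcI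
      (hc ▸ tangentGap_one_log_lt_zero),
    hmono.reflect_lt hcI (hmem (by norm_num) (by norm_num)) (hc ▸ zero_lt_tangentGap_one_log)⟩

/-- If `c` solves `h (c - 1) = h c - h' c`, then `0.947 < h (c - 1) - h c < 0.949`;
that is, `G(1) ≈ 0.948`. -/
theorem hill_G_one_approx {c : ℝ}
    (hc : hill (c - 1) = hill c - 1 * hill' c) :
    0.947 < hill (c - 1) - hill c ∧ hill (c - 1) - hill c < 0.949 := by
  obtain ⟨hlo, hhi⟩ := mem_Ioo_log_of_tangentGap_one_eq_zero (sub_eq_zero.2 hc)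
  have hG : hill (c - 1) - hill c = (cosh c)⁻¹ := by
    rw [hc, hill']
    ring
  have hsech_lo := inv_cosh_lt_inv_cosh (log_nonneg (by norm_num)) hlo
  have hsech_hi := inv_cosh_lt_inv_cosh ((log_nonneg (by norm_num)).trans hlo.le) hhi
  rw [inv_cosh_log (by norm_num)] at hsech_lo hsech_hi
  rw [hG]
  constructor <;> norm_num at hsech_lo hsech_hi ⊢ <;> linarith
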